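/- The ascending chain of ideals of R given by J_n = (ᾱ_1σ², ᾱ_1²σ², …, ᾱ_1ⁿσ²)R, n ≥ 1, is strictly increasing; consequently R is not a noetherian ring. -/

import Mathlib

open MvPolynomial

noncomputable section

variable (k : Type*) [Field k]

/-- The polynomial ring in 12 variables `x₁..x₄, y₁..y₄, z₁..z₄`:
a variable is indexed by `(t, i)` with `t : Fin 3` (`0 ↦ x`, `1 ↦ y`, `2 ↦ z`)
and `i : Fin 4` the index modulo 4. -/
abbrev B := MvPolynomial (Fin 3 × Fin 4) k

/-- `x_i` (indices modulo 4). -/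
def xv (i : ℕ) : B k := X (0, (Fin.ofNat 4 i))
/-- `y_i` (indices modulo 4). -/
def yv (i : ℕ) : B k := X (1, (Fin.ofNat 4 i))
/-- `z_i` (indices modulo 4). -/
def zv (i : ℕ) : B k := X (2, (Fin.ofNat 4 i))

/-- `σ = x₁x₂x₃x₄ · y₁y₂y₃y₄ · z₁z₂z₃z₄`, the product of all 12 variables. -/
def sig : B k := ∏ p : Fin 3 × Fin 4, X p

/-- The substitution `x_i ↦ x_{i+1}, y_i ↦ y_{i+1}, z_i ↦ z_{i+1}` (indices mod 4). -/
def rot : B k →ₐ[k] B k := aeval (fun p => X (p.1, p.2 + 1))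

/-- `ᾱ₁ = x₂x₃²x₄ · y₁y₃y₄² · z₁z₂²z₃`. -/
def a1 : B k :=
  xv k 2 * xv k 3 ^ 2 * xv k 4 * yv k 1 * yv k 3 * yv k 4 ^ 2 * zv k 1 * zv k 2 ^ 2 * zv k 3

/-- `ᾱ₂ = (x₁x₄y₁y₄z₁z₄)²`. -/
def a2 : B k := (xv k 1 * xv k 4 * yv k 1 * yv k 4 * zv k 1 * zv k 4) ^ 2

/-- `ᾱ_j` for `j ≥ 1`: `ᾱ₁`, `ᾱ₂` are as above and `ᾱ_{j+2}` is obtained from `ᾱ_j`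
by applying the substitution `rot`. -/
def alpha (j : ℕ) : B k := (⇑(rot k))^[(j - 1) / 2] (if j % 2 = 1 then a1 k else a2 k)
/-- The cycle algebra `S = k[σ, ᾱ₁, …, ᾱ₈] ⊆ B`. -/
def Scal : Subalgebra k (B k) := Algebra.adjoin k (insert (sig k) (alpha k '' Set.Icc 1 8))
/-- Reduction of an index to `{1, …, 8}`, implementing "indices modulo 8". -/
def idx (j : ℕ) : ℕ := (j - 1) % 8 + 1

lemma idx_mem (j : ℕ) : idx j ∈ Set.Icc 1 8 :=
  ⟨Nat.le_add_left 1 _, Nat.succ_le_of_lt (Nat.mod_lt _ (by norm_num))⟩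

/-- `σ` as an element of `S`. -/
def σS : ↥(Scal k) := ⟨sig k, Algebra.subset_adjoin (Set.mem_insert _ _)⟩

/-- `ᾱ_j` (indices modulo 8) as an element of `S`. -/
def αS (j : ℕ) : ↥(Scal k) :=
  ⟨alpha k (idx j), Algebra.subset_adjoin (Set.mem_insert_of_mem _ ⟨idx j, idx_mem j, rfl⟩)⟩
/-- The ideal `I = (σ², ᾱ_jᾱ_{j+1}ᾱ_{j+2} | j ∈ {1, …, 8})` of `S`, indices modulo 8. -/
def Ic : Ideal ↥(Scal k) :=
  Ideal.span (insert (σS k ^ 2)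
    {p | ∃ j ∈ Finset.Icc 1 8, p = αS k j * αS k (j + 1) * αS k (j + 2)})

/-- The subset `R = k[σ] + I` of `S`. -/
def Rset : Set ↥(Scal k) :=
  {r | ∃ p ∈ Algebra.adjoin k {σS k}, ∃ s ∈ Ic k, r = p + s}
/-- The center `R = k[σ] + I`, as a `k`-subalgebra of `S`. -/
def Rsub : Subalgebra k ↥(Scal k) where
  carrier := Rset k
  add_mem' := by
    rintro a b ⟨p₁, hp₁, s₁, hs₁, rfl⟩ ⟨p₂, hp₂, s₂, hs₂, rfl⟩
    exact ⟨p₁ + p₂, add_mem hp₁ hp₂, s₁ + s₂, (Ic k).add_mem hs₁ hs₂, add_add_add_comm _ _ _ _⟩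
  mul_mem' := by
    rintro a b ⟨p₁, hp₁, s₁, hs₁, rfl⟩ ⟨p₂, hp₂, s₂, hs₂, rfl⟩
    exact ⟨p₁ * p₂, mul_mem hp₁ hp₂,
      p₁ * s₂ + s₁ * p₂ + s₁ * s₂,
      (Ic k).add_mem ((Ic k).add_mem ((Ic k).mul_mem_left _ hs₂) ((Ic k).mul_mem_right _ hs₁))
        ((Ic k).mul_mem_left _ hs₂),
      by ring⟩
  algebraMap_mem' := fun c =>
    ⟨algebraMap k _ c, Subalgebra.algebraMap_mem _ c, 0, (Ic k).zero_mem, (add_zero _).symm⟩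
/-- `ᾱ₁^m σ²` as an element of `R`. -/
def genR (m : ℕ) : ↥(Rsub k) :=
  ⟨αS k 1 ^ m * σS k ^ 2,
    ⟨0, zero_mem _, αS k 1 ^ m * σS k ^ 2,
      (Ic k).mul_mem_left _ (Ideal.subset_span (Set.mem_insert _ _)), (zero_add _).symm⟩⟩

/-- The ideal `J_n = (ᾱ₁σ², ᾱ₁²σ², …, ᾱ₁ⁿσ²)` of `R`. -/
def Jn (n : ℕ) : Ideal ↥(Rsub k) := Ideal.span (genR k '' Set.Icc 1 n)

/-!
Every generator of `I`, and `σ` itself, has a factor divisible by `x₁`: among `ᾱ₁, …, ᾱ₈` only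
`ᾱ₁, ᾱ₆, ᾱ₈` are prime to `x₁`, and no three cyclically consecutive indices lie in `{1, 6, 8}`.
Hence every element of `R` is a constant plus a multiple of `x₁`, so its coefficients vanish at
the nonzero `x₁`-free exponents, in particular at the exponents `s • e` (`s ≥ 1`) of the powers
of `ᾱ₁ = x^e`. If `ᾱ₁^(n+1) σ² = ∑_{m ≤ n} r_m ᾱ₁^m σ²` in `R`, comparing coefficients at the
exponent of the left-hand side gives `1 = ∑_m coeff_{(n+1-m) • e} r_m = 0`.
-/

theorem exists_sub_algebraMap_mem_of_mem_adjoin_singleton {R A : Type*} [CommSemiring R]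
    [CommRing A] [Algebra R A] {I : Ideal A} {s x : A} (hs : s ∈ I)
    (hx : x ∈ Algebra.adjoin R {s}) : ∃ c : R, x - algebraMap R A c ∈ I := by
  induction hx using Algebra.adjoin_induction with
  | mem y hy => exact ⟨0, by simpa [Set.mem_singleton_iff.mp hy] using hs⟩
  | algebraMap c => exact ⟨c, by simp⟩
  | add y z _ _ hy hz =>
    obtain ⟨c, hc⟩ := hy
    obtain ⟨d, hd⟩ := hz
    exact ⟨c + d, by convert I.add_mem hc hd using 1; simp only [map_add]; ring⟩
  | mul y z _ _ hy hz =>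
    obtain ⟨c, hc⟩ := hy
    obtain ⟨d, hd⟩ := hz
    refine ⟨c * d, ?_⟩
    convert I.add_mem (I.mul_mem_right z hc) (I.mul_mem_left (algebraMap R A c) hd) using 1
    simp only [map_mul]; ring

namespace MvPolynomial

variable {σ R : Type*} [CommRing R]

theorem coeff_eq_zero_of_sub_C_mem_span_X {i : σ} {f : MvPolynomial σ R} {c : R}
    (hf : f - C c ∈ Ideal.span {X i}) {d : σ →₀ ℕ} (hd : d ≠ 0) (hdi : d i = 0) :
    coeff d f = 0 := by
  rw [← Set.image_singleton, mem_ideal_span_X_image] at hf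
  by_contra h
  have hmem : d ∈ (f - C c).support := by
    rw [mem_support_iff, coeff_sub, coeff_C_of_ne_zero hd, sub_zero]
    exact h
  obtain ⟨j, rfl, hj⟩ := hf d hmem
  exact hj hdi

end MvPolynomial

theorem notMem_span_image_Icc_of_coeff_nsmul_eq_zero {A σ R : Type*} [CommSemiring A]
    [CommSemiring R] [Nontrivial R] (ψ : A →+* MvPolynomial σ R) {v w : σ →₀ ℕ}
    (hψ : ∀ a s, 1 ≤ s → coeff (s • v) (ψ a) = 0) {g : ℕ → A}
    (hg : ∀ m, ψ (g m) = monomial (m • v + w) 1) (n : ℕ) :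
    g (n + 1) ∉ Ideal.span (g '' Set.Icc 1 n) := by
  have hvanish : ∀ x ∈ Ideal.span (g '' Set.Icc 1 n), ∀ a,
      coeff ((n + 1) • v + w) (ψ (a * x)) = 0 := by
    intro x hx
    induction hx using Submodule.span_induction with
    | mem x hx =>
      obtain ⟨m, ⟨hm, hmn⟩, rfl⟩ := hx
      intro a
      have hexp : (n + 1) • v + w = (n + 1 - m) • v + (m • v + w) := by
        rw [← add_assoc, ← add_smul, Nat.sub_add_cancel (by omega)]
      rw [map_mul, hg, hexp, coeff_mul_monomial, mul_one]
      exact hψ a _ (by omega)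
    | zero => simp
    | add x y _ _ hx hy => intro a; rw [mul_add, map_add, coeff_add, hx, hy, add_zero]
    | smul b x _ hx => intro a; rw [smul_eq_mul, ← mul_assoc]; exact hx _
  classical
  intro h
  have := hvanish _ h 1
  rw [one_mul, hg, coeff_monomial, if_pos rfl] at this
  exact one_ne_zero this

lemma rot_xv (i : ℕ) : rot k (xv k i) = xv k (i + 1) := by
  simp only [rot, xv, aeval_X]
  congr 2
  exact Fin.ext (by simp [Fin.val_add, Nat.add_mod])

lemma xv_one_dvd_alpha {j : ℕ} (hj : j ∈ ({2, 3, 4, 5, 7} : Finset ℕ)) : xv k 1 ∣ alpha k j := by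
  have hx : Prime (xv k 1) := X_prime
  simp only [Finset.mem_insert, Finset.mem_singleton] at hj
  rcases hj with rfl | rfl | rfl | rfl | rfl <;>
    simp [alpha, a1, a2, rot_xv, hx.dvd_mul, hx.dvd_pow_iff_dvd, show xv k 5 = xv k 1 from rfl]

lemma xv_one_dvd_alpha_mul_alpha_mul_alpha {j : ℕ} (hj : j ∈ Finset.Icc 1 8) :
    xv k 1 ∣ alpha k (idx j) * alpha k (idx (j + 1)) * alpha k (idx (j + 2)) := by
  have hcover : ∀ j ∈ Finset.Icc 1 8, idx j ∈ ({2, 3, 4, 5, 7} : Finset ℕ) ∨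
      idx (j + 1) ∈ ({2, 3, 4, 5, 7} : Finset ℕ) ∨ idx (j + 2) ∈ ({2, 3, 4, 5, 7} : Finset ℕ) := by
    decide
  rcases hcover j hj with h | h | h
  · exact ((xv_one_dvd_alpha k h).mul_right _).mul_right _
  · exact ((xv_one_dvd_alpha k h).mul_left _).mul_right _
  · exact (xv_one_dvd_alpha k h).mul_left _

lemma xv_one_dvd_sig : xv k 1 ∣ sig k :=
  Finset.dvd_prod_of_mem _ (Finset.mem_univ _)

lemma Ic_le_comap_span_xv_one : Ic k ≤ (Ideal.span {xv k 1}).comap (Scal k).val := by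
  refine Ideal.span_le.mpr ?_
  rintro _ (rfl | ⟨j, hj, rfl⟩) <;>
    rw [SetLike.mem_coe, Ideal.mem_comap, Ideal.mem_span_singleton]
  · exact (xv_one_dvd_sig k).trans (dvd_pow_self _ two_ne_zero)
  · exact xv_one_dvd_alpha_mul_alpha_mul_alpha k hj

lemma exists_sub_C_mem_span_xv_one (r : Rsub k) :
    ∃ c : k, ((r : Scal k) : B k) - C c ∈ Ideal.span {xv k 1} := by
  obtain ⟨p, hp, s, hs, hr⟩ := r.2
  obtain ⟨c, hc⟩ := exists_sub_algebraMap_mem_of_mem_adjoin_singleton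
    (I := (Ideal.span {xv k 1}).comap (Scal k).val)
    (Ideal.mem_span_singleton.mpr (xv_one_dvd_sig k)) hp
  refine ⟨c, ?_⟩
  rw [hr, show ((p + s : Scal k) : B k) - C c = ((p - algebraMap k _ c + s : Scal k) : B k) by
    simp only [Subalgebra.coe_add, Subalgebra.coe_sub, Subalgebra.coe_algebraMap, algebraMap_eq]
    ring]
  exact add_mem hc (Ic_le_comap_span_xv_one k hs)

-- The second coordinate `0 : Fin 4` is the index `4` of `x₄, y₄, z₄`.
def a1Exp : Fin 3 × Fin 4 →₀ ℕ :=
  Finsupp.single (0, 2) 1 + Finsupp.single (0, 3) 2 + Finsupp.single (0, 0) 1 +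
  Finsupp.single (1, 1) 1 + Finsupp.single (1, 3) 1 + Finsupp.single (1, 0) 2 +
  Finsupp.single (2, 1) 1 + Finsupp.single (2, 2) 2 + Finsupp.single (2, 3) 1

lemma a1_eq_monomial : a1 k = monomial a1Exp 1 := by
  simp only [a1, a1Exp, xv, yv, zv, X, monomial_pow, monomial_mul, one_pow,
    Finsupp.smul_single, smul_eq_mul, mul_one]
  rfl

lemma sig_eq_monomial : sig k = monomial (∑ p, Finsupp.single p 1) 1 :=
  (monomial_sum_one _ _).symm

lemma a1Exp_apply_zero_one : a1Exp (0, 1) = 0 := by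
  simp [a1Exp]

lemma coeff_nsmul_a1Exp_eq_zero (r : Rsub k) {s : ℕ} (hs : 1 ≤ s) :
    coeff (s • a1Exp) ((r : Scal k) : B k) = 0 := by
  obtain ⟨c, hc⟩ := exists_sub_C_mem_span_xv_one k r
  refine coeff_eq_zero_of_sub_C_mem_span_X hc ?_ ?_
  · intro h
    have := congrArg (· (0, 3)) h
    simp [a1Exp] at this
    omega
  · change s • a1Exp (0, 1) = 0
    rw [a1Exp_apply_zero_one, smul_zero]

lemma genR_val (m : ℕ) :
    ((genR k m : Scal k) : B k) = monomial (m • a1Exp + 2 • ∑ p, Finsupp.single p 1) 1 := by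
  change a1 k ^ m * sig k ^ 2 = _
  rw [a1_eq_monomial, sig_eq_monomial, monomial_pow, monomial_pow, monomial_mul, one_pow, one_pow,
    one_mul]

lemma Jn_lt_succ (n : ℕ) : Jn k n < Jn k (n + 1) := by
  have hle : Jn k n ≤ Jn k (n + 1) :=
    Ideal.span_mono (Set.image_mono (Set.Icc_subset_Icc_right n.le_succ))
  have hmem : genR k (n + 1) ∈ Jn k (n + 1) :=
    Ideal.subset_span ⟨n + 1, ⟨by omega, le_rfl⟩, rfl⟩
  have hnotMem : genR k (n + 1) ∉ Jn k n :=
    notMem_span_image_Icc_of_coeff_nsmul_eq_zero ((Scal k).val.comp (Rsub k).val).toRingHom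
      (g := genR k) (fun r _ hs => coeff_nsmul_a1Exp_eq_zero k r hs) (genR_val k) n
  exact SetLike.lt_iff_le_and_exists.mpr ⟨hle, _, hmem, hnotMem⟩

/-- The chain of ideals `J_n = (ᾱ₁σ², …, ᾱ₁ⁿσ²)` of `R` is strictly increasing;
consequently `R` is not a noetherian ring. -/
theorem stmt7 :
    (∀ n : ℕ, 1 ≤ n → Jn k n < Jn k (n + 1)) ∧ ¬ IsNoetherianRing ↥(Rsub k) :=
  ⟨fun n _ => Jn_lt_succ k n,
    fun _ => not_strictMono_of_wellFoundedGT (Jn k) (strictMono_nat_of_lt_succ (Jn_lt_succ k))⟩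

end
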